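/- arXiv:2601.11107 — 2 statements merged into one kernel-verified Lean document; each statement's English description precedes it below -/
import Mathlib

section
/- Integer optimality cut validity for binary states: let Q : {0,1}^d → ℝ with Q ≥ L, fix ŷ ∈ {0,1}^d and let γ = Q(ŷ). Define the cut c(y) = (γ − L)·(∑_j ((ŷ_j − 1) y_j + (y_j − 1) ŷ_j)) + γ. Then for every y ∈ {0,1}^d, Q(y) ≥ c(y); moreover c(ŷ) = γ (the cut is tight at ŷ). -/
open Finset in
/-- Integer optimality cut validity for binary states: with `Q ≥ L` on binary
vectors, `γ = Q ŷ`, and `γ ≥ L`, the integer optimality cut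
`c(y) = (γ − L)·(∑_j ((ŷ_j − 1) y_j + (y_j − 1) ŷ_j)) + γ` satisfies
`Q y ≥ c y` for every binary `y`, and is tight at `ŷ`. -/
theorem integer_optimality_cut_valid {d : ℕ} (Q : (Fin d → ℝ) → ℝ) (L : ℝ)
    (hQL : ∀ y : Fin d → ℝ, (∀ j, y j = 0 ∨ y j = 1) → Q y ≥ L)
    (yhat : Fin d → ℝ) (hyhat : ∀ j, yhat j = 0 ∨ yhat j = 1)
    (γ : ℝ) (hγ : γ = Q yhat) (hγL : L ≤ γ) :
    (∀ y : Fin d → ℝ, (∀ j, y j = 0 ∨ y j = 1) →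
      Q y ≥ (γ - L) * (∑ j, ((yhat j - 1) * y j + (y j - 1) * yhat j)) + γ) ∧
    (γ - L) * (∑ j, ((yhat j - 1) * yhat j + (yhat j - 1) * yhat j)) + γ = γ := by
  have hsum0 : (∑ j, ((yhat j - 1) * yhat j + (yhat j - 1) * yhat j)) = 0 := by
    apply Finset.sum_eq_zero
    intro j _
    rcases hyhat j with h | h <;> rw [h] <;> ring
  refine ⟨?_, by rw [hsum0]; ring⟩
  intro y hy
  by_cases hye : y = yhat
  · subst hye
    rw [hsum0]
    simp [hγ]
  · have hne : ∃ j, y j ≠ yhat j := by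
      by_contra h
      push_neg at h
      exact hye (funext h)
    obtain ⟨j0, hj0⟩ := hne
    have hsum : (∑ j, ((yhat j - 1) * y j + (y j - 1) * yhat j)) ≤ -1 := by
      have := Finset.sum_le_sum (s := Finset.univ)
        (f := fun j => ((yhat j - 1) * y j + (y j - 1) * yhat j))
        (g := fun j => if j = j0 then (-1 : ℝ) else 0) ?_
      · calc _ ≤ ∑ j, (if j = j0 then (-1 : ℝ) else 0) := this
          _ = -1 := by simp
      · intro j _
        rcases hyhat j with h1 | h1 <;> rcases hy j with h2 | h2 <;>
          rw [h1, h2] <;> split_ifs with he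
        all_goals first
          | (subst he; rw [h1, h2] at hj0; exact absurd rfl hj0)
          | norm_num
    have h1 : (γ - L) * (∑ j, ((yhat j - 1) * y j + (y j - 1) * yhat j)) ≤ (γ - L) * (-1) := by
      apply mul_le_mul_of_nonneg_left hsum (by linarith)
    have := hQL y hy
    linarith
end

section
/- Tightness of the strengthened cut when the LP relaxation is exact: in the setting of strengthened-cut dominance, if the infimum over the relaxed set S' of the Lagrangian is attained at a point of S (i.e., no integrality gap for this multiplier), then η + α·Y° = ρ, so the strengthened cut coincides with the classical Pareto-optimal cut; if every minimizer over S' lies outside S and the inf over S is strictly larger, the strengthened cut strictly dominates. -/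
open Finset in
/-- Tightness of the strengthened cut when the LP relaxation is exact: if the
infimum of the Lagrangian over the relaxed set `S'` is attained at a point of
`S`, then `η + α·Y° = ρ` and the strengthened cut coincides with the classical
Pareto-optimal cut; if instead the infimum over `S` is strictly larger than
`ρ − α·Y°` (i.e. `η + α·Y° > ρ`), the strengthened cut strictly dominates for
every `Y`. -/
theorem strengthened_cut_tightness {X : Type*} {d : ℕ}
    (S S' : Set X) (f : X → ℝ) (Yfun : X → Fin d → ℝ) (α Ycore : Fin d → ℝ)
    (hSS' : S ⊆ S') (hSne : S.Nonempty)
    (hbdd : BddBelow ((fun x => f x + ∑ i, α i * (Ycore i - Yfun x i)) '' S'))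
    (ρ η : ℝ)
    (hρ : ρ = sInf ((fun x => f x + ∑ i, α i * (Ycore i - Yfun x i)) '' S'))
    (hη : η = sInf ((fun x => f x - ∑ i, α i * Yfun x i) '' S)) :
    ((∃ x₀ ∈ S, f x₀ + ∑ i, α i * (Ycore i - Yfun x₀ i) = ρ) →
      η + ∑ i, α i * Ycore i = ρ) ∧
    (η + ∑ i, α i * Ycore i > ρ →
      ∀ Y : Fin d → ℝ,
        η + ∑ i, α i * Y i > ρ + ∑ i, α i * (Y i - Ycore i)) := by
  set c : ℝ := ∑ i, α i * Ycore i with hc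
  have hfun : ∀ x, f x + ∑ i, α i * (Ycore i - Yfun x i)
      = (f x - ∑ i, α i * Yfun x i) + c := by
    intro x
    simp only [hc, mul_sub, Finset.sum_sub_distrib]
    ring
  -- bounded below of S image
  obtain ⟨b, hb⟩ := hbdd
  have hbddS : BddBelow ((fun x => f x - ∑ i, α i * Yfun x i) '' S) := by
    refine ⟨b - c, ?_⟩
    rintro y ⟨x, hx, rfl⟩
    have := hb ⟨x, hSS' hx, rfl⟩
    simp only at this ⊢
    rw [hfun x] at this
    linarith
  -- ρ ≤ η + c
  have hρle : ρ ≤ η + c := by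
    rw [hη]
    have : ρ - c ≤ sInf ((fun x => f x - ∑ i, α i * Yfun x i) '' S) := by
      apply le_csInf (hSne.image _)
      rintro y ⟨x, hx, rfl⟩
      have : ρ ≤ f x + ∑ i, α i * (Ycore i - Yfun x i) := by
        rw [hρ]
        exact csInf_le ⟨b, hb⟩ ⟨x, hSS' hx, rfl⟩
      rw [hfun x] at this
      simp only
      linarith
    linarith
  constructor
  · rintro ⟨x₀, hx₀S, hx₀⟩
    have hle : η ≤ f x₀ - ∑ i, α i * Yfun x₀ i := by
      rw [hη]; exact csInf_le hbddS ⟨x₀, hx₀S, rfl⟩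
    rw [hfun x₀] at hx₀
    linarith
  · intro hgt Y
    have : ∑ i, α i * (Y i - Ycore i) = (∑ i, α i * Y i) - c := by
      simp only [hc, mul_sub, Finset.sum_sub_distrib]
    linarith
end
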